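/- Let E be a Hilbert C*-module over a C*-algebra A, B = closure of span⟨E,E⟩, and (J_i) a family of closed left ideals of B. Then ⋂_i E(J_i) = E(⋂_i J_i), where E(J) denotes the closed span of {ξa : ξ ∈ E, a ∈ J}. -/

import Mathlib

open scoped InnerProductSpace RightActions
open Filter Topology

/-- The Hilbert C⋆-module class as it stood in the older Mathlib (right `A`-action through
`Aᵐᵒᵖ`); Mathlib's `CStarModule` now uses a left action with other axioms. -/
class CStarModuleOld (A E : Type*) [NonUnitalSemiring A] [StarRing A] [Module ℂ A]
    [AddCommGroup E] [Module ℂ E] [PartialOrder A] [SMul Aᵐᵒᵖ E] [Norm A] [Norm E]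
    extends Inner A E where
  inner_add_right {x} {y} {z} : inner x (y + z) = inner x y + inner x z
  inner_self_nonneg {x} : 0 ≤ inner x x
  inner_self {x} : inner x x = 0 ↔ x = 0
  inner_op_smul_right {a : A} {x y : E} : inner x (y <• a) = inner x y * a
  inner_smul_right_complex {z : ℂ} {x} {y} : inner x (z • y) = z • inner x y
  star_inner x y : star (inner x y) = inner y x
  norm_eq_sqrt_norm_inner_self x : ‖x‖ = √‖inner x x‖

section Defs

variable (A : Type*) (E : Type*) [NonUnitalCStarAlgebra A] [PartialOrder A] [StarOrderedRing A]
  [NormedAddCommGroup E] [NormedSpace ℂ E] [SMul Aᵐᵒᵖ E] [CStarModuleOld A E]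

/-- An operator on a Hilbert C*-module is *adjointable* if it admits an adjoint with respect to
the `A`-valued inner product. -/
def Adjointable (T : E →L[ℂ] E) : Prop :=
  ∃ S : E →L[ℂ] E, ∀ x y : E, ⟪T x, y⟫_A = ⟪x, S y⟫_A

/-- `EJ A E J` is the closed linear span `E(J)` of `{ξ • a : ξ ∈ E, a ∈ J}`. -/
noncomputable def EJ (J : Set A) : Submodule ℂ E :=
  (Submodule.span ℂ {y : E | ∃ ξ : E, ∃ a ∈ J, y = ξ <• a}).topologicalClosure

/-- `JM A E M` is the closed linear span `J(M)` of `{⟪η, m⟫ : η ∈ E, m ∈ M}`. -/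
noncomputable def JM (M : Set E) : Submodule ℂ A :=
  (Submodule.span ℂ {a : A | ∃ η : E, ∃ m ∈ M, a = ⟪η, m⟫_A}).topologicalClosure

/-- `BS A E` is the C*-algebra `B`, the closure of the linear span of all inner products. -/
noncomputable def BS : Set A :=
  closure (Submodule.span ℂ {a : A | ∃ η ξ : E, a = ⟪η, ξ⟫_A} : Set A)

/-- `KE A E` is `K(E)`, the closed (non-unital) algebra generated by the rank-one operators
`θ_{η,ξ} : x ↦ η • ⟪ξ, x⟫`. -/
noncomputable def KE : NonUnitalSubalgebra ℂ (E →L[ℂ] E) :=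
  (NonUnitalAlgebra.adjoin ℂ
    {T : E →L[ℂ] E | ∃ η ξ : E, ∀ x : E, T x = η <• ⟪ξ, x⟫_A}).topologicalClosure

end Defs

variable {A E : Type*} [NonUnitalCStarAlgebra A] [PartialOrder A] [StarOrderedRing A]
  [NormedAddCommGroup E] [NormedSpace ℂ E] [SMul Aᵐᵒᵖ E] [CStarModuleOld A E]

/-!
If `x ∈ E(Jᵢ)` then `⟪x, x⟫ ∈ Jᵢ`, because `⟪η, ξ • a⟫ = ⟪η, ξ⟫ a` and `Jᵢ` is a closed left
ideal of `B`. Being a closed subalgebra, `Jᵢ` then contains every `f(⟪x, x⟫)` of the continuous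
functional calculus, so `x • f(⟪x, x⟫) ∈ E(⋂ᵢ Jᵢ)`. These elements approximate `x`: the inner
square of `x - x • f(⟪x, x⟫)` is `g(⟪x, x⟫)` with `g t = t (1 - f t)²`, and for
`f t = min (t / δ) 1` we have `0 ≤ g ≤ δ` on the (nonnegative) spectrum of `⟪x, x⟫`.
-/

lemma mul_one_sub_min_div_sq_le {t δ : ℝ} (ht : 0 ≤ t) (hδ : 0 < δ) :
    t * (1 - min (t / δ) 1) ^ 2 ≤ δ := by
  rcases le_total t δ with htδ | hδt
  · rw [min_eq_left ((div_le_one hδ).mpr htδ)]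
    have h0 : 0 ≤ 1 - t / δ := by rw [sub_nonneg, div_le_one hδ]; exact htδ
    have h1 : 1 - t / δ ≤ 1 := by have := div_nonneg ht hδ.le; linarith
    calc t * (1 - t / δ) ^ 2 ≤ t * 1 := by gcongr; exact pow_le_one₀ h0 h1
      _ ≤ δ := by linarith
  · rw [min_eq_right ((one_le_div hδ).mpr hδt)]
    simp [hδ.le]

namespace CStarModuleOld

section

omit [StarOrderedRing A]

lemma isSelfAdjoint_inner_self (x : E) : IsSelfAdjoint ⟪x, x⟫_A := star_inner x x

noncomputable def innerₗ (η : E) : E →ₗ[ℂ] A where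
  toFun x := ⟪η, x⟫_A
  map_add' _ _ := inner_add_right
  map_smul' _ _ := inner_smul_right_complex

lemma inner_zero_right {x : E} : ⟪x, (0 : E)⟫_A = 0 := map_zero (innerₗ (A := A) x)

lemma inner_sub_right {x y z : E} : ⟪x, y - z⟫_A = ⟪x, y⟫_A - ⟪x, z⟫_A :=
  map_sub (innerₗ (A := A) x) y z

lemma inner_sub_left {x y z : E} : ⟪x - y, z⟫_A = ⟪x, z⟫_A - ⟪y, z⟫_A := by
  rw [← star_inner z, inner_sub_right, star_sub, star_inner, star_inner]

lemma inner_op_smul_left {a : A} {x y : E} : ⟪x <• a, y⟫_A = star a * ⟪x, y⟫_A := by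
  rw [← star_inner y, inner_op_smul_right, star_mul, star_inner]

lemma inner_smul_right_real {r : ℝ} {x y : E} : ⟪x, r • y⟫_A = r • ⟪x, y⟫_A := by
  rw [← Complex.coe_smul, inner_smul_right_complex, Complex.coe_smul]

lemma inner_smul_left_real {r : ℝ} {x y : E} : ⟪r • x, y⟫_A = r • ⟪x, y⟫_A := by
  rw [← star_inner y, inner_smul_right_real, star_smul, star_trivial, star_inner]

end

lemma star_mul_inner_self_mul_le (a : A) (x : E) :
    star a * ⟪x, x⟫_A * a ≤ ‖x‖ ^ 2 • (star a * a) := by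
  calc star a * ⟪x, x⟫_A * a ≤ ‖⟪x, x⟫_A‖ • (star a * a) :=
        CStarAlgebra.star_left_conjugate_le_norm_smul (isSelfAdjoint_inner_self x)
    _ = ‖x‖ ^ 2 • (star a * a) := by
        rw [norm_eq_sqrt_norm_inner_self (A := A) x, Real.sq_sqrt (norm_nonneg _)]

/-- Expand `0 ≤ ⟪x • a - ‖x‖² y, x • a - ‖x‖² y⟫` at `a = ⟪x, y⟫`. -/
lemma inner_mul_inner_swap_le (x y : E) : ⟪y, x⟫_A * ⟪x, y⟫_A ≤ ‖x‖ ^ 2 • ⟪y, y⟫_A := by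
  rcases eq_or_ne x 0 with rfl | hx
  · simp [← star_inner y (0 : E), inner_zero_right]
  set a := ⟪x, y⟫_A
  set r := ‖x‖ ^ 2
  have hexpand : ⟪x <• a - r • y, x <• a - r • y⟫_A
      = star a * ⟪x, x⟫_A * a - r • (star a * a) - r • (star a * a) + r • (r • ⟪y, y⟫_A) := by
    simp only [inner_sub_right, inner_op_smul_right, inner_sub_left, inner_op_smul_left,
      inner_smul_left_real, inner_smul_right_real, ← star_inner x y, smul_sub, sub_mul,
      smul_mul_assoc, mul_assoc]
    abel
  have hnonneg : 0 ≤ r • (r • ⟪y, y⟫_A - star a * a) := by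
    calc (0 : A) ≤ ⟪x <• a - r • y, x <• a - r • y⟫_A := inner_self_nonneg
      _ ≤ r • (star a * a) - r • (star a * a) - r • (star a * a) + r • (r • ⟪y, y⟫_A) := by
        rw [hexpand]; gcongr; exact star_mul_inner_self_mul_le a x
      _ = r • (r • ⟪y, y⟫_A - star a * a) := by rw [smul_sub]; abel
  have hr : 0 < r := by positivity
  rw [← star_inner x y]
  exact sub_nonneg.mp ((smul_nonneg_iff_nonneg_of_pos_left hr).mp hnonneg)

lemma norm_inner_le (x y : E) : ‖⟪x, y⟫_A‖ ≤ ‖x‖ * ‖y‖ := by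
  have hsq : ‖⟪x, y⟫_A‖ ^ 2 ≤ (‖x‖ * ‖y‖) ^ 2 := calc
    ‖⟪x, y⟫_A‖ ^ 2 = ‖⟪y, x⟫_A * ⟪x, y⟫_A‖ := by
        rw [← star_inner x, CStarRing.norm_star_mul_self, pow_two]
    _ ≤ ‖‖x‖ ^ 2 • ⟪y, y⟫_A‖ := by
        refine CStarAlgebra.norm_le_norm_of_nonneg_of_le ?_ (inner_mul_inner_swap_le x y)
        rw [← star_inner x]
        exact star_mul_self_nonneg _
    _ = (‖x‖ * ‖y‖) ^ 2 := by
        rw [norm_smul, norm_eq_sqrt_norm_inner_self (A := A) y, mul_pow,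
          Real.sq_sqrt (norm_nonneg _), norm_pow, norm_norm]
  exact (pow_le_pow_iff_left₀ (norm_nonneg _) (by positivity) two_ne_zero).mp hsq

noncomputable def innerSL (η : E) : E →L[ℂ] A :=
  (innerₗ (A := A) η).mkContinuous ‖η‖ (norm_inner_le η)

lemma innerSL_apply {η x : E} : innerSL (A := A) η x = ⟪η, x⟫_A := rfl

omit [StarOrderedRing A] in
lemma inner_self_sub_op_smul_cfcₙ (x : E) {f : ℝ → ℝ} (hf : Continuous f) (hf0 : f 0 = 0) :
    ⟪x - x <• cfcₙ f ⟪x, x⟫_A, x - x <• cfcₙ f ⟪x, x⟫_A⟫_A =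
      cfcₙ (fun t => t * (1 - f t) ^ 2) ⟪x, x⟫_A := by
  have ha := isSelfAdjoint_inner_self (A := A) x
  have hexpand : (fun t : ℝ => t * (1 - f t) ^ 2) =
      fun t => (t - f t * t) - (t - f t * t) * f t := by
    funext t; ring
  rw [hexpand, cfcₙ_sub (fun t => t - f t * t) (fun t => (t - f t * t) * f t),
    cfcₙ_mul (fun t => t - f t * t) f, cfcₙ_sub (fun t => t) (fun t => f t * t),
    cfcₙ_mul f (fun t => t), cfcₙ_id' ℝ ⟪x, x⟫_A]
  simp only [inner_sub_left, inner_sub_right, inner_op_smul_left, inner_op_smul_right,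
    (cfcₙ_predicate f ⟪x, x⟫_A).star_eq]

lemma norm_sub_op_smul_cfcₙ_le (x : E) {f : ℝ → ℝ} (hf : Continuous f) (hf0 : f 0 = 0) {ε : ℝ}
    (hε : ∀ t ≥ 0, t * (1 - f t) ^ 2 ≤ ε) : ‖x - x <• cfcₙ f ⟪x, x⟫_A‖ ≤ √ε := by
  rw [norm_eq_sqrt_norm_inner_self (A := A), inner_self_sub_op_smul_cfcₙ x hf hf0]
  gcongr
  refine norm_cfcₙ_le fun t ht => ?_
  have ht0 : 0 ≤ t := quasispectrum_nonneg_of_nonneg _ inner_self_nonneg t ht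
  rw [Real.norm_of_nonneg (by positivity)]
  exact hε t ht0

lemma mem_closure_range_op_smul_cfcₙ (x : E) :
    x ∈ closure (Set.range fun f : ℝ → ℝ => x <• cfcₙ f ⟪x, x⟫_A) := by
  refine Metric.mem_closure_iff.mpr fun ε hε => ?_
  set δ := (ε / 2) ^ 2
  have hδ : 0 < δ := by positivity
  refine ⟨_, ⟨fun t => min (t / δ) 1, rfl⟩, ?_⟩
  rw [dist_eq_norm]
  calc ‖x - x <• cfcₙ (fun t => min (t / δ) 1) ⟪x, x⟫_A‖ ≤ √δ :=
        norm_sub_op_smul_cfcₙ_le x (by fun_prop) (by simp) fun _ ht =>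
          mul_one_sub_min_div_sq_le ht hδ
    _ = ε / 2 := Real.sqrt_sq (by positivity)
    _ < ε := half_lt_self hε

end CStarModuleOld

open CStarModuleOld

omit [PartialOrder A] [StarOrderedRing A] in
/-- For self-adjoint `a` the star subalgebra generated by `a` is the subalgebra generated by `a`,
so `S` need not be star-closed. -/
lemma cfcₙ_mem_of_isSelfAdjoint {S : NonUnitalSubalgebra ℝ A} (hS : IsClosed (S : Set A))
    {a : A} (ha : IsSelfAdjoint a) (haS : a ∈ S) (f : ℝ → ℝ) : cfcₙ f a ∈ S := by
  have hadjoin : (NonUnitalStarAlgebra.adjoin ℝ {a} : Set A) ⊆ S := by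
    rw [← NonUnitalStarSubalgebra.coe_toNonUnitalSubalgebra,
      NonUnitalStarAlgebra.adjoin_toNonUnitalSubalgebra, Set.star_singleton, ha.star_eq,
      Set.union_self, SetLike.coe_subset_coe, NonUnitalAlgebra.adjoin_le_iff]
    simpa using haS
  exact closure_minimal hadjoin hS (cfcₙ_mem_elemental f a)

omit [StarOrderedRing A] in
lemma inner_mem_BS (η ξ : E) : ⟪η, ξ⟫_A ∈ BS A E :=
  subset_closure <| Submodule.subset_span ⟨η, ξ, rfl⟩

omit [NonUnitalCStarAlgebra A] [PartialOrder A] [StarOrderedRing A] [CStarModuleOld A E] in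
lemma EJ_mono {J K : Set A} (hJK : J ⊆ K) : EJ A E J ≤ EJ A E K :=
  Submodule.topologicalClosure_mono <|
    Submodule.span_mono fun _ ⟨ξ, a, ha, hy⟩ => ⟨ξ, a, hJK ha, hy⟩

omit [NonUnitalCStarAlgebra A] [PartialOrder A] [StarOrderedRing A] [CStarModuleOld A E] in
lemma op_smul_mem_EJ {J : Set A} (ξ : E) {a : A} (ha : a ∈ J) : ξ <• a ∈ EJ A E J :=
  Submodule.le_topologicalClosure _ <| Submodule.subset_span ⟨ξ, a, ha, rfl⟩

lemma inner_mem_of_mem_EJ {J : Submodule ℂ A} (hJclosed : IsClosed (J : Set A))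
    (hJleft : ∀ b ∈ BS A E, ∀ j ∈ J, b * j ∈ J) (η : E) {x : E}
    (hx : x ∈ EJ A E (J : Set A)) : ⟪η, x⟫_A ∈ J := by
  have hle : EJ A E (J : Set A) ≤ J.comap (innerSL (A := A) η).toLinearMap := by
    refine Submodule.topologicalClosure_minimal _ ?_ (hJclosed.preimage (innerSL η).continuous)
    rw [Submodule.span_le]
    rintro - ⟨ξ, a, haJ, rfl⟩
    rw [SetLike.mem_coe, Submodule.mem_comap, ContinuousLinearMap.coe_coe, innerSL_apply,
      inner_op_smul_right]
    exact hJleft _ (inner_mem_BS η ξ) a haJ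
  exact hle hx

/-- A closed left ideal of `B` is a closed subalgebra, and it contains `⟪x, x⟫`. -/
lemma cfcₙ_inner_self_mem_of_mem_EJ {J : Submodule ℂ A} (hJB : (J : Set A) ⊆ BS A E)
    (hJclosed : IsClosed (J : Set A)) (hJleft : ∀ b ∈ BS A E, ∀ j ∈ J, b * j ∈ J) {x : E}
    (hx : x ∈ EJ A E (J : Set A)) (f : ℝ → ℝ) : cfcₙ f ⟪x, x⟫_A ∈ J := by
  let S : NonUnitalSubalgebra ℝ A :=
    { J.restrictScalars ℝ with mul_mem' := fun ha hb => hJleft _ (hJB ha) _ hb }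
  exact cfcₙ_mem_of_isSelfAdjoint (S := S) hJclosed (isSelfAdjoint_inner_self x)
    (inner_mem_of_mem_EJ hJclosed hJleft x hx) f

lemma mem_EJ_of_forall_cfcₙ_mem {K : Set A} {x : E} (hK : ∀ f : ℝ → ℝ, cfcₙ f ⟪x, x⟫_A ∈ K) :
    x ∈ EJ A E K :=
  closure_minimal (Set.range_subset_iff.mpr fun f => op_smul_mem_EJ x (hK f))
    (Submodule.isClosed_topologicalClosure _) (mem_closure_range_op_smul_cfcₙ x)

/-- For a family `(Jᵢ)` of closed left ideals of `B = closure span ⟪E,E⟫`,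
`⋂ᵢ E(Jᵢ) = E(⋂ᵢ Jᵢ)`. -/
theorem iInter_EJ_eq_EJ_iInter {ι : Type*} (J : ι → Submodule ℂ A)
    (hJB : ∀ i, ((J i : Set A)) ⊆ BS A E) (hJclosed : ∀ i, IsClosed ((J i : Set A)))
    (hJleft : ∀ i, ∀ b ∈ BS A E, ∀ j ∈ J i, b * j ∈ J i) :
    (⋂ i, ((EJ A E (J i : Set A) : Submodule ℂ E) : Set E)) =
      ((EJ A E (⋂ i, (J i : Set A)) : Submodule ℂ E) : Set E) := by
  refine subset_antisymm (fun x hx => ?_)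
    (Set.subset_iInter fun i => EJ_mono (Set.iInter_subset _ i))
  rw [Set.mem_iInter] at hx
  exact mem_EJ_of_forall_cfcₙ_mem fun f => Set.mem_iInter.mpr fun i =>
    cfcₙ_inner_self_mem_of_mem_EJ (hJB i) (hJclosed i) (hJleft i) (hx i) f
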